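/- arXiv:1301.6443 — 5 statements merged into one kernel-verified Lean document; each statement's English description precedes it below -/
import Mathlib

section
/- The space of firmly nonexpansive mappings is complete under the metric ρ̂: if (T_k) is a sequence of firmly nonexpansive maps on X that is Cauchy with respect to ρ̂ (i.e., for every ε > 0 there is N such that ρ̂(T_j, T_k) < ε for all j, k ≥ N), then there exists a firmly nonexpansive map T : X → X such that ρ̂(T_k, T) → 0 as k → ∞. -/
open RealInnerProductSpace Filter

variable {X : Type*} [NormedAddCommGroup X] [InnerProductSpace ℝ X] [CompleteSpace X]

/-- `T` is nonexpansive. -/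
def Nonexpansive (T : X → X) : Prop := ∀ x y : X, ‖T x - T y‖ ≤ ‖x - y‖

/-- `T` is firmly nonexpansive. -/
def FirmlyNonexpansive (T : X → X) : Prop :=
  ∀ x y : X, ‖T x - T y‖ ^ 2 ≤ ⟪x - y, T x - T y⟫

/-- `‖T₁ - T₂‖ₙ = sup_{‖x‖ ≤ n} ‖T₁ x - T₂ x‖`. -/
noncomputable def ballSup (T₁ T₂ : X → X) (n : ℕ) : ℝ :=
  sSup {r : ℝ | ∃ x : X, ‖x‖ ≤ (n : ℝ) ∧ r = ‖T₁ x - T₂ x‖}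

/-- The metric `ρ` on nonexpansive maps. -/
noncomputable def rho (T₁ T₂ : X → X) : ℝ :=
  ∑' n : ℕ, (1 / 2 ^ (n + 1)) *
    (ballSup T₁ T₂ (n + 1) / (1 + ballSup T₁ T₂ (n + 1)))

/-- The metric `ρ̂` on firmly nonexpansive maps: `ρ̂(T₁,T₂) = ρ(2T₁ - Id, 2T₂ - Id)`. -/
noncomputable def rhoHat (T₁ T₂ : X → X) : ℝ :=
  rho (fun x => (2 : ℝ) • T₁ x - x) (fun x => (2 : ℝ) • T₂ x - x)

/-- `T` is super-regular with limit point `xT`. -/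
def SuperRegularAt (T : X → X) (xT : X) : Prop :=
  ∀ s : ℝ, 0 < s → ∀ ε : ℝ, 0 < ε → ∃ N : ℕ, ∀ n ≥ N, ∀ x : X, ‖x‖ ≤ s → ‖T^[n] x - xT‖ < ε

/-- `T` is super-regular. -/
def SuperRegular (T : X → X) : Prop := ∃ xT : X, SuperRegularAt T xT

/-- `T` is a (Banach) contraction. -/
def Contraction (T : X → X) : Prop :=
  ∃ l : ℝ, 0 ≤ l ∧ l < 1 ∧ ∀ x y : X, ‖T x - T y‖ ≤ l * ‖x - y‖

set_option linter.unusedSectionVars false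

lemma nonexp_of_firm {T : X → X} (h : FirmlyNonexpansive T) :
    Nonexpansive (fun x => (2:ℝ) • T x - x) := by
  intro x y
  have key : ‖((2:ℝ) • T x - x) - ((2:ℝ) • T y - y)‖^2 ≤ ‖x - y‖^2 := by
    have h1 := h x y
    have e : ((2:ℝ) • T x - x) - ((2:ℝ) • T y - y) = (2:ℝ) • (T x - T y) - (x - y) := by
      rw [smul_sub]; abel
    rw [e, norm_sub_sq_real, norm_smul, real_inner_smul_left]
    simp only [Real.norm_ofNat]
    nlinarith [real_inner_comm (T x - T y) (x - y)]
  exact le_of_pow_le_pow_left₀ two_ne_zero (norm_nonneg _) key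

lemma ballSup_set_nonempty (T₁ T₂ : X → X) (n : ℕ) :
    Set.Nonempty {r : ℝ | ∃ x : X, ‖x‖ ≤ (n : ℝ) ∧ r = ‖T₁ x - T₂ x‖} :=
  ⟨‖T₁ 0 - T₂ 0‖, 0, by simp⟩

lemma ballSup_bdd {T₁ T₂ : X → X} (h₁ : Nonexpansive T₁) (h₂ : Nonexpansive T₂) (n : ℕ) :
    BddAbove {r : ℝ | ∃ x : X, ‖x‖ ≤ (n : ℝ) ∧ r = ‖T₁ x - T₂ x‖} := by
  refine ⟨2 * n + ‖T₁ 0 - T₂ 0‖, ?_⟩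
  rintro r ⟨x, hx, rfl⟩
  have h1 : ‖T₁ x - T₂ x‖ ≤ ‖T₁ x - T₁ 0‖ + ‖T₁ 0 - T₂ 0‖ + ‖T₂ 0 - T₂ x‖ := by
    calc ‖T₁ x - T₂ x‖ ≤ ‖T₁ x - T₂ 0‖ + ‖T₂ 0 - T₂ x‖ := norm_sub_le_norm_sub_add_norm_sub _ _ _
    _ ≤ ‖T₁ x - T₁ 0‖ + ‖T₁ 0 - T₂ 0‖ + ‖T₂ 0 - T₂ x‖ := by
        linarith [norm_sub_le_norm_sub_add_norm_sub (T₁ x) (T₁ 0) (T₂ 0)]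
  have h2 := h₁ x 0
  have h3 := h₂ 0 x
  simp only [sub_zero, zero_sub, norm_neg] at h2 h3
  linarith
  
lemma le_ballSup {T₁ T₂ : X → X} (h₁ : Nonexpansive T₁) (h₂ : Nonexpansive T₂) {n : ℕ}
    {x : X} (hx : ‖x‖ ≤ (n : ℝ)) : ‖T₁ x - T₂ x‖ ≤ ballSup T₁ T₂ n :=
  le_csSup (ballSup_bdd h₁ h₂ n) ⟨x, hx, rfl⟩

lemma ballSup_nonneg {T₁ T₂ : X → X} (h₁ : Nonexpansive T₁) (h₂ : Nonexpansive T₂) (n : ℕ) :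
    0 ≤ ballSup T₁ T₂ n :=
  le_trans (norm_nonneg _) (le_ballSup (x := 0) h₁ h₂ (by simp))

lemma ballSup_le {T₁ T₂ : X → X} {n : ℕ} {c : ℝ}
    (h : ∀ x : X, ‖x‖ ≤ (n : ℝ) → ‖T₁ x - T₂ x‖ ≤ c) : ballSup T₁ T₂ n ≤ c := by
  apply csSup_le (ballSup_set_nonempty T₁ T₂ n)
  rintro r ⟨x, hx, rfl⟩; exact h x hx

lemma frac_mono {a b : ℝ} (ha : 0 ≤ a) (hab : a ≤ b) : a / (1 + a) ≤ b / (1 + b) := by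
  rw [div_le_div_iff₀ (by linarith) (by linarith)]; nlinarith

lemma frac_lt_frac {a b : ℝ} (ha : 0 ≤ a) (hb : 0 ≤ b) (h : a / (1 + a) < b / (1 + b)) :
    a < b := by
  by_contra hc
  exact absurd (frac_mono hb (not_lt.mp hc)) (not_le.mpr h)

lemma frac_nonneg {a : ℝ} (ha : 0 ≤ a) : 0 ≤ a / (1 + a) := div_nonneg ha (by linarith)

lemma frac_le_one {a : ℝ} (ha : 0 ≤ a) : a / (1 + a) ≤ 1 :=
  div_le_one_of_le₀ (by linarith) (by linarith)

lemma frac_le_self {a : ℝ} (ha : 0 ≤ a) : a / (1 + a) ≤ a :=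
  div_le_self ha (by linarith)

lemma rho_term_nonneg {T₁ T₂ : X → X} (h₁ : Nonexpansive T₁) (h₂ : Nonexpansive T₂) (n : ℕ) :
    0 ≤ (1 / 2 ^ (n + 1)) *
      (ballSup T₁ T₂ (n + 1) / (1 + ballSup T₁ T₂ (n + 1))) :=
  mul_nonneg (by positivity) (frac_nonneg (ballSup_nonneg h₁ h₂ _))

lemma rho_term_le {T₁ T₂ : X → X} (h₁ : Nonexpansive T₁) (h₂ : Nonexpansive T₂) (n : ℕ) :
    (1 / 2 ^ (n + 1)) * (ballSup T₁ T₂ (n + 1) / (1 + ballSup T₁ T₂ (n + 1)))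
      ≤ ((1:ℝ)/2) ^ (n + 1) := by
  rw [one_div_pow]
  calc _ ≤ (1 / 2 ^ (n+1) : ℝ) * 1 :=
        mul_le_mul_of_nonneg_left (frac_le_one (ballSup_nonneg h₁ h₂ _)) (by positivity)
  _ = 1 / 2 ^ (n+1) := mul_one _

lemma rho_summable {T₁ T₂ : X → X} (h₁ : Nonexpansive T₁) (h₂ : Nonexpansive T₂) :
    Summable (fun n : ℕ => (1 / 2 ^ (n + 1)) *
      (ballSup T₁ T₂ (n + 1) / (1 + ballSup T₁ T₂ (n + 1)))) := by
  apply Summable.of_nonneg_of_le (rho_term_nonneg h₁ h₂) (rho_term_le h₁ h₂)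
  exact (summable_geometric_of_lt_one (by norm_num) (by norm_num)).comp_injective
    (add_left_injective 1)

lemma le_rho {T₁ T₂ : X → X} (h₁ : Nonexpansive T₁) (h₂ : Nonexpansive T₂) (n : ℕ) :
    (1 / 2 ^ (n + 1)) * (ballSup T₁ T₂ (n + 1) / (1 + ballSup T₁ T₂ (n + 1)))
      ≤ rho T₁ T₂ :=
  Summable.le_tsum (rho_summable h₁ h₂) n (fun m _ => rho_term_nonneg h₁ h₂ m)

lemma rho_nonneg {T₁ T₂ : X → X} (h₁ : Nonexpansive T₁) (h₂ : Nonexpansive T₂) :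
    0 ≤ rho T₁ T₂ :=
  tsum_nonneg (rho_term_nonneg h₁ h₂)

lemma geo_summable : Summable (fun n : ℕ => ((1:ℝ)/2)^(n+1)) :=
  (summable_geometric_of_lt_one (by norm_num) (by norm_num)).comp_injective
    (add_left_injective 1)

lemma geo_tail (M : ℕ) : ∑' n : ℕ, ((1:ℝ)/2)^(n+M+1) = (1/2)^M := by
  have hg : ∑' n : ℕ, ((1:ℝ)/2)^n = 2 := by
    rw [tsum_geometric_of_lt_one (by norm_num) (by norm_num)]; norm_num
  calc ∑' n : ℕ, ((1:ℝ)/2)^(n+M+1) = ∑' n : ℕ, ((1/2:ℝ)^(M+1) * (1/2)^n) := by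
        congr 1; funext n; rw [← pow_add]; ring_nf
  _ = (1/2:ℝ)^(M+1) * 2 := by rw [tsum_mul_left, hg]
  _ = (1/2:ℝ)^M := by rw [pow_succ]; ring

set_option maxHeartbeats 1600000 in
/-- `(J(X), ρ̂)` is complete. -/
theorem firmlyNonexpansive_complete (T : ℕ → X → X) (hT : ∀ k, FirmlyNonexpansive (T k))
    (hCauchy : ∀ ε : ℝ, 0 < ε → ∃ N : ℕ, ∀ j ≥ N, ∀ k ≥ N, rhoHat (T j) (T k) < ε) :
    ∃ S : X → X, FirmlyNonexpansive S ∧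
      Tendsto (fun k => rhoHat (T k) S) atTop (nhds 0) := by
  have hF : ∀ k, Nonexpansive (fun x => (2:ℝ) • T k x - x) := fun k => nonexp_of_firm (hT k)
  -- pointwise Cauchy
  have hcau : ∀ x : X, CauchySeq (fun k => T k x) := by
    intro x
    rw [Metric.cauchySeq_iff]
    intro ε hε
    set m := ⌈‖x‖⌉₊ with hm
    have hxm : ‖x‖ ≤ ((m + 1 : ℕ) : ℝ) := le_trans (Nat.le_ceil _) (by push_cast; linarith)
    have hδpos : (0:ℝ) < (1/2^(m+1)) * ((2*ε) / (1 + 2*ε)) := by positivity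
    obtain ⟨N, hN⟩ := hCauchy _ hδpos
    refine ⟨N, fun j hj k hk => ?_⟩
    have hr : rho (fun x => (2:ℝ) • T j x - x) (fun x => (2:ℝ) • T k x - x)
        < (1/2^(m+1)) * ((2*ε) / (1 + 2*ε)) := hN j hj k hk
    have hterm := le_rho (hF j) (hF k) m
    have hbnn := ballSup_nonneg (hF j) (hF k) (m+1)
    set b := ballSup (fun x => (2:ℝ) • T j x - x) (fun x => (2:ℝ) • T k x - x) (m+1) with hb
    have h1 : (1/2^(m+1):ℝ) * (b/(1+b)) < (1/2^(m+1)) * ((2*ε)/(1+2*ε)) :=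
      lt_of_le_of_lt hterm hr
    have h2 : b/(1+b) < (2*ε)/(1+2*ε) := lt_of_mul_lt_mul_left h1 (by positivity)
    have h3 : b < 2*ε := frac_lt_frac hbnn (by linarith) h2
    have h4 : ‖((2:ℝ) • T j x - x) - ((2:ℝ) • T k x - x)‖ ≤ b := le_ballSup (hF j) (hF k) hxm
    have e : ((2:ℝ) • T j x - x) - ((2:ℝ) • T k x - x) = (2:ℝ) • (T j x - T k x) := by
      rw [smul_sub]; abel
    rw [e, norm_smul, Real.norm_ofNat] at h4
    rw [dist_eq_norm]
    linarith
  choose S hS using fun x => cauchySeq_tendsto_of_complete (hcau x)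
  have hSfirm : FirmlyNonexpansive S := by
    intro x y
    have h1 : Tendsto (fun k => ‖T k x - T k y‖^2) atTop (nhds (‖S x - S y‖^2)) :=
      (((hS x).sub (hS y)).norm).pow 2
    have h2 : Tendsto (fun k => ⟪x - y, T k x - T k y⟫) atTop (nhds ⟪x - y, S x - S y⟫) :=
      tendsto_const_nhds.inner ((hS x).sub (hS y))
    exact le_of_tendsto_of_tendsto' h1 h2 (fun k => hT k x y)
  have hFS : Nonexpansive (fun x => (2:ℝ) • S x - x) := nonexp_of_firm hSfirm
  refine ⟨S, hSfirm, ?_⟩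
  rw [Metric.tendsto_atTop]
  intro ε hε
  obtain ⟨M, hM⟩ : ∃ M : ℕ, ((1:ℝ)/2)^M < ε/2 :=
    exists_pow_lt_of_lt_one (by linarith) (by norm_num)
  have hδpos : (0:ℝ) < (1/2^M) * ((ε/4) / (1 + ε/4)) := by positivity
  obtain ⟨N, hN⟩ := hCauchy _ hδpos
  refine ⟨N, fun k hk => ?_⟩
  rw [Real.dist_eq, sub_zero]
  have hrr : rhoHat (T k) S = rho (fun x => (2:ℝ) • T k x - x) (fun x => (2:ℝ) • S x - x) := rfl
  rw [hrr, abs_of_nonneg (rho_nonneg (hF k) hFS)]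
  have claim : ∀ n : ℕ, n < M →
      ballSup (fun x => (2:ℝ) • T k x - x) (fun x => (2:ℝ) • S x - x) (n+1) ≤ ε/4 := by
    intro n hn
    apply ballSup_le
    intro x hx
    have hfx : Tendsto (fun j => (2:ℝ) • T j x - x) atTop (nhds ((2:ℝ) • S x - x)) :=
      ((hS x).const_smul (2:ℝ)).sub tendsto_const_nhds
    have hbound : ∀ j ≥ N, ‖((2:ℝ) • T k x - x) - ((2:ℝ) • T j x - x)‖ ≤ ε/4 := by
      intro j hj
      have hr : rho (fun x => (2:ℝ) • T k x - x) (fun x => (2:ℝ) • T j x - x)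
          < (1/2^M) * ((ε/4) / (1 + ε/4)) := hN k hk j hj
      have hterm := le_rho (hF k) (hF j) n
      set b := ballSup (fun x => (2:ℝ) • T k x - x) (fun x => (2:ℝ) • T j x - x) (n+1) with hb
      have hbnn := ballSup_nonneg (hF k) (hF j) (n+1)
      have h1 : (1/2^M : ℝ) * (b/(1+b)) ≤ (1/2^(n+1)) * (b/(1+b)) := by
        apply mul_le_mul_of_nonneg_right _ (frac_nonneg hbnn)
        apply one_div_le_one_div_of_le (by positivity)
        exact pow_le_pow_right₀ (by norm_num) hn
      have h2 : b/(1+b) < (ε/4)/(1+ε/4) :=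
        lt_of_mul_lt_mul_left (lt_of_le_of_lt (le_trans h1 hterm) hr) (by positivity)
      have h3 : b < ε/4 := frac_lt_frac hbnn (by positivity) h2
      exact le_trans (le_ballSup (hF k) (hF j) hx) (le_of_lt h3)
    have hlim : Tendsto (fun j => ‖((2:ℝ) • T k x - x) - ((2:ℝ) • T j x - x)‖) atTop
        (nhds ‖((2:ℝ) • T k x - x) - ((2:ℝ) • S x - x)‖) :=
      (tendsto_const_nhds.sub hfx).norm
    exact le_of_tendsto hlim (eventually_atTop.mpr ⟨N, hbound⟩)
  -- final estimate
  set f := fun n : ℕ => (1/2^(n+1):ℝ) *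
    (ballSup (fun x => (2:ℝ) • T k x - x) (fun x => (2:ℝ) • S x - x) (n+1) /
      (1 + ballSup (fun x => (2:ℝ) • T k x - x) (fun x => (2:ℝ) • S x - x) (n+1))) with hf
  have hsum : Summable f := rho_summable (hF k) hFS
  have hRho : rho (fun x => (2:ℝ) • T k x - x) (fun x => (2:ℝ) • S x - x) = ∑ i ∈ Finset.range M, f i + ∑' i, f (i + M) :=
    (Summable.sum_add_tsum_nat_add M hsum).symm
  have hpart : ∑ i ∈ Finset.range M, f i ≤ ε/4 := by
    have h1 : ∀ i ∈ Finset.range M, f i ≤ (ε/4) * (1/2:ℝ)^(i+1) := by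
      intro i hi
      have hb := claim i (Finset.mem_range.mp hi)
      have hbnn := ballSup_nonneg (hF k) hFS (i+1)
      have h2 : ballSup (fun x => (2:ℝ) • T k x - x) (fun x => (2:ℝ) • S x - x) (i+1) /
          (1 + ballSup (fun x => (2:ℝ) • T k x - x) (fun x => (2:ℝ) • S x - x) (i+1)) ≤ ε/4 :=
        le_trans (frac_le_self hbnn) hb
      calc f i ≤ (1/2^(i+1):ℝ) * (ε/4) := mul_le_mul_of_nonneg_left h2 (by positivity)
      _ = (ε/4) * (1/2:ℝ)^(i+1) := by rw [one_div_pow]; ring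
    calc ∑ i ∈ Finset.range M, f i ≤ ∑ i ∈ Finset.range M, (ε/4) * (1/2:ℝ)^(i+1) :=
          Finset.sum_le_sum h1
    _ = (ε/4) * ∑ i ∈ Finset.range M, (1/2:ℝ)^(i+1) := by rw [Finset.mul_sum]
    _ ≤ (ε/4) * 1 := by
        apply mul_le_mul_of_nonneg_left _ (by linarith)
        have := Summable.sum_le_tsum (Finset.range M) (fun i _ => by positivity) geo_summable
        calc ∑ i ∈ Finset.range M, (1/2:ℝ)^(i+1) ≤ ∑' i : ℕ, (1/2:ℝ)^(i+1) := this
        _ = 1 := by simpa using geo_tail 0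
    _ = ε/4 := mul_one _
  have htail : ∑' i, f (i + M) ≤ (1/2:ℝ)^M := by
    have h1 : ∀ i : ℕ, f (i + M) ≤ (1/2:ℝ)^(i + M + 1) := fun i => rho_term_le (hF k) hFS (i + M)
    calc ∑' i, f (i + M) ≤ ∑' i : ℕ, (1/2:ℝ)^(i + M + 1) :=
          Summable.tsum_le_tsum h1 ((summable_nat_add_iff M).mpr hsum)
            ((summable_nat_add_iff M).mpr geo_summable)
    _ = (1/2:ℝ)^M := geo_tail M
  calc rho (fun x => (2:ℝ) • T k x - x) (fun x => (2:ℝ) • S x - x) = ∑ i ∈ Finset.range M, f i + ∑' i, f (i + M) := hRho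
  _ ≤ ε/4 + (1/2:ℝ)^M := add_le_add hpart htail
  _ < ε/4 + ε/2 := by linarith
  _ < ε := by linarith
end

section
/- Contractive firmly nonexpansive mappings are dense among firmly nonexpansive mappings: for every firmly nonexpansive map T : X → X and every ε > 0 there exist l ∈ [0, 1) and a firmly nonexpansive map T₁ : X → X that is a contraction with modulus l and satisfies ρ̂(T, T₁) < ε. -/
open RealInnerProductSpace Filter

variable {X : Type*} [NormedAddCommGroup X] [InnerProductSpace ℝ X] [CompleteSpace X]

/-- contractive firmly nonexpansive maps are `ρ̂`-dense in `J(X)`. -/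
theorem firm_contractions_dense (T : X → X) (hT : FirmlyNonexpansive T) (ε : ℝ) (hε : 0 < ε) :
    ∃ (l : ℝ) (T₁ : X → X), 0 ≤ l ∧ l < 1 ∧ FirmlyNonexpansive T₁ ∧
      (∀ x y : X, ‖T₁ x - T₁ y‖ ≤ l * ‖x - y‖) ∧ rhoHat T T₁ < ε := by
  classical
  set C := ‖T 0‖ with hCdef
  have hC0 : 0 ≤ C := norm_nonneg _
  -- T is nonexpansive
  have hTne : ∀ x y : X, ‖T x - T y‖ ≤ ‖x - y‖ := by
    intro x y
    have h1 := hT x y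
    have h2 : ⟪x - y, T x - T y⟫ ≤ ‖x - y‖ * ‖T x - T y‖ := real_inner_le_norm _ _
    nlinarith [norm_nonneg (T x - T y), norm_nonneg (x - y)]
  -- the comparison series
  have hg : Summable (fun n : ℕ => ((n : ℝ) + 1 + C) * (1 / 2) ^ (n + 1)) := by
    have h1 : Summable (fun n : ℕ => (n : ℝ) * (1 / 2) ^ n) := by
      simpa using summable_pow_mul_geometric_of_norm_lt_one 1 (r := (1 / 2 : ℝ))
        (by rw [Real.norm_eq_abs, abs_of_nonneg (by norm_num : (0:ℝ) ≤ 1/2)]; norm_num)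
    have h2 : Summable (fun n : ℕ => ((1 : ℝ) + C) * (1 / 2) ^ n) :=
      (summable_geometric_of_lt_one (by norm_num) (by norm_num)).mul_left _
    have := (h1.add h2).mul_left (1 / 2 : ℝ)
    apply this.congr
    intro n
    simp only [pow_succ]
    ring
  set G := ∑' n : ℕ, ((n : ℝ) + 1 + C) * (1 / 2) ^ (n + 1) with hGdef
  have hG0 : 0 ≤ G := tsum_nonneg fun n => by positivity
  set t : ℝ := min (1 / 2) (ε / (2 * (G + 1))) with htdef
  have ht0 : 0 < t := lt_min (by norm_num) (by positivity)
  have ht12 : t ≤ 1 / 2 := min_le_left _ _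
  have htG : 2 * t * (G + 1) ≤ ε := by
    have h := min_le_right (1 / 2) (ε / (2 * (G + 1)))
    have hpos : (0 : ℝ) < 2 * (G + 1) := by linarith
    rw [le_div_iff₀ hpos] at h
    calc 2 * t * (G + 1) = t * (2 * (G + 1)) := by ring
      _ ≤ ε := h
  refine ⟨1 - t, fun x => (1 - t) • T x, by linarith, by linarith, ?_, ?_, ?_⟩
  · -- firmly nonexpansive
    intro x y
    have hin : (0 : ℝ) ≤ ⟪x - y, T x - T y⟫ := le_trans (by positivity) (hT x y)
    have hs : (1 - t) • T x - (1 - t) • T y = (1 - t) • (T x - T y) := (smul_sub _ _ _).symm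
    rw [hs, norm_smul, real_inner_smul_right]
    have habs : |1 - t| = 1 - t := abs_of_nonneg (by linarith)
    rw [Real.norm_eq_abs, habs, mul_pow]
    have h1 := hT x y
    have h2 : (1 - t) ^ 2 * ‖T x - T y‖ ^ 2 ≤ (1 - t) ^ 2 * ⟪x - y, T x - T y⟫ :=
      mul_le_mul_of_nonneg_left h1 (sq_nonneg _)
    have h3 : (1 - t) ^ 2 ≤ 1 - t := by nlinarith [ht0, ht12]
    have h4 : (1 - t) ^ 2 * ⟪x - y, T x - T y⟫ ≤ (1 - t) * ⟪x - y, T x - T y⟫ :=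
      mul_le_mul_of_nonneg_right h3 hin
    linarith
  · -- contraction
    intro x y
    have hs : (1 - t) • T x - (1 - t) • T y = (1 - t) • (T x - T y) := (smul_sub _ _ _).symm
    rw [hs, norm_smul, Real.norm_eq_abs, abs_of_nonneg (by linarith : (0:ℝ) ≤ 1 - t)]
    exact mul_le_mul_of_nonneg_left (hTne x y) (by linarith)
  · -- rhoHat estimate
    have key : ∀ x : X, (2 : ℝ) • T x - x - ((2 : ℝ) • ((1 - t) • T x) - x) = (2 * t) • T x := by
      intro x
      rw [smul_smul]
      module
    have hTx : ∀ (n : ℕ) (x : X), ‖x‖ ≤ ((n : ℝ) + 1) → ‖T x‖ ≤ (n : ℝ) + 1 + C := by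
      intro n x hx
      have h0 := hTne x 0
      simp only [sub_zero] at h0
      calc ‖T x‖ ≤ ‖T x - T 0‖ + ‖T 0‖ := by
            have := norm_sub_norm_le (T x) (T 0)
            have := norm_add_le (T x - T 0) (T 0)
            calc ‖T x‖ = ‖T x - T 0 + T 0‖ := by rw [sub_add_cancel]
              _ ≤ ‖T x - T 0‖ + ‖T 0‖ := norm_add_le _ _
        _ ≤ ‖x‖ + C := by rw [hCdef] at *; linarith [h0]
        _ ≤ (n : ℝ) + 1 + C := by linarith
    set S : X → X := fun x => (2 : ℝ) • T x - x with hS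
    set S₁ : X → X := fun x => (2 : ℝ) • ((1 - t) • T x) - x with hS₁
    have hb_nonneg : ∀ n : ℕ, 0 ≤ ballSup S S₁ (n + 1) := by
      intro n
      apply Real.sSup_nonneg
      rintro r ⟨x, hx, rfl⟩
      positivity
    have hb_le : ∀ n : ℕ, ballSup S S₁ (n + 1) ≤ 2 * t * ((n : ℝ) + 1 + C) := by
      intro n
      apply Real.sSup_le
      · rintro r ⟨x, hx, rfl⟩
        have hx' : ‖x‖ ≤ (n : ℝ) + 1 := by
          rw [Nat.cast_add, Nat.cast_one] at hx; exact hx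
        have := key x
        simp only [hS, hS₁]
        rw [this, norm_smul, Real.norm_eq_abs, abs_of_nonneg (by linarith : (0:ℝ) ≤ 2 * t)]
        exact mul_le_mul_of_nonneg_left (hTx n x hx') (by linarith)
      · positivity
    have hterm : ∀ n : ℕ,
        (1 / 2 ^ (n + 1) : ℝ) * (ballSup S S₁ (n + 1) / (1 + ballSup S S₁ (n + 1)))
          ≤ 2 * t * (((n : ℝ) + 1 + C) * (1 / 2) ^ (n + 1)) := by
      intro n
      have hb0 := hb_nonneg n
      have hbb := hb_le n
      have hdiv : ballSup S S₁ (n + 1) / (1 + ballSup S S₁ (n + 1)) ≤ ballSup S S₁ (n + 1) :=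
        div_le_self hb0 (by linarith)
      have hpow : (0 : ℝ) < 1 / 2 ^ (n + 1) := by positivity
      calc (1 / 2 ^ (n + 1) : ℝ) * (ballSup S S₁ (n + 1) / (1 + ballSup S S₁ (n + 1)))
          ≤ (1 / 2 ^ (n + 1) : ℝ) * (2 * t * ((n : ℝ) + 1 + C)) :=
            mul_le_mul_of_nonneg_left (le_trans hdiv hbb) hpow.le
        _ = 2 * t * (((n : ℝ) + 1 + C) * (1 / 2) ^ (n + 1)) := by
            rw [one_div_pow]; ring
    have hterm_nonneg : ∀ n : ℕ,
        (0 : ℝ) ≤ (1 / 2 ^ (n + 1) : ℝ) *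
          (ballSup S S₁ (n + 1) / (1 + ballSup S S₁ (n + 1))) := by
      intro n
      have hb0 := hb_nonneg n
      have h1 : (0:ℝ) < 1 + ballSup S S₁ (n + 1) := by linarith
      positivity
    have hgf : Summable (fun n : ℕ => 2 * t * (((n : ℝ) + 1 + C) * (1 / 2) ^ (n + 1))) :=
      hg.mul_left _
    have hf : Summable (fun n : ℕ =>
        (1 / 2 ^ (n + 1) : ℝ) * (ballSup S S₁ (n + 1) / (1 + ballSup S S₁ (n + 1)))) :=
      Summable.of_nonneg_of_le hterm_nonneg hterm hgf
    have hsum : rhoHat T (fun x => (1 - t) • T x) ≤ 2 * t * G := by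
      have h := Summable.tsum_le_tsum hterm hf hgf
      rw [tsum_mul_left] at h
      exact h
    have : 2 * t * G < ε := by
      have : 2 * t * G < 2 * t * (G + 1) := by nlinarith
      linarith
    linarith
end

section
/- Generic super-regularity in complete subspaces: let F be a set of nonexpansive maps on X and let d be a distance function on F (nonnegative, symmetric, satisfying the triangle inequality, and with d(T₁, T₂) = 0 iff T₁ = T₂) such that every d-Cauchy sequence in F d-converges to an element of F, d(T₁, T₂) ≥ ρ(T₁, T₂) for all T₁, T₂ ∈ F, and the set of contractions belonging to F is d-dense in F (for every T ∈ F and ε > 0 there is a contraction C ∈ F with d(C, T) < ε). Then there exists a sequence (O_q) of subsets of F, each d-open in F and d-dense in F, such that every T ∈ ⋂_q O_q is super-regular; in particular each such T has a unique fixed point. -/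
open RealInnerProductSpace Filter

variable {X : Type*} [NormedAddCommGroup X] [InnerProductSpace ℝ X] [CompleteSpace X]

/-!
A contraction is super-regular, and super-regularity of a nonexpansive map `C` survives, up to
`ε`, uniform perturbation on a large ball: if `Cⁿ` sends the ball of radius `2R` about its fixed
point `z` into the `ε/2`-ball about `z` for `n ≥ N`, and `S` is `δ`-close to `C` on the ball of
radius `3R` with `(N + 1) δ ≤ ε/2`, then `S^(N+1)` sends that `2R`-ball into the `ε`-ball, and
the `S`-orbits of the `R`-ball never leave the `2R`-ball. Since `ρ`-closeness forces uniform
closeness on balls, the maps all of whose `ρ`-neighbours (within `F`) have iterates eventually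
`1/(q+1)`-close to a single point on the ball of radius `q` form an open set `O q` containing
all contractions, hence dense. A map in every `O q` has iterates that are uniformly Cauchy on
bounded sets, so they converge to a constant, which is then the unique fixed point.
-/

open Function Topology

section

variable {E : Type*} [NormedAddCommGroup E]

theorem Nonexpansive.lipschitzWith {T : E → E} (hT : Nonexpansive T) : LipschitzWith 1 T :=
  LipschitzWith.of_dist_le_mul fun x y => by simpa [dist_eq_norm] using hT x y

theorem Nonexpansive.norm_iterate_sub_le {T : E → E} (hT : Nonexpansive T) (n : ℕ) (x y : E) :
    ‖T^[n] x - T^[n] y‖ ≤ ‖x - y‖ := by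
  simpa [dist_eq_norm] using (hT.lipschitzWith.iterate n).dist_le_mul x y

theorem Nonexpansive.norm_iterate_sub_le_of_isFixedPt {T : E → E} (hT : Nonexpansive T) {z : E}
    (hz : IsFixedPt T z) (n : ℕ) (x : E) : ‖T^[n] x - z‖ ≤ ‖x - z‖ := by
  simpa [(hz.iterate n).eq] using hT.norm_iterate_sub_le n x z

theorem Contraction.nonexpansive {C : E → E} (hC : Contraction C) : Nonexpansive C := by
  obtain ⟨l, hl0, hl1, hl⟩ := hC
  exact fun x y => (hl x y).trans (mul_le_of_le_one_left (norm_nonneg _) hl1.le)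

theorem SuperRegularAt.tendsto_iterate {T : E → E} {z : E} (h : SuperRegularAt T z) (x : E) :
    Tendsto (fun n => T^[n] x) atTop (𝓝 z) := by
  refine Metric.tendsto_atTop.mpr fun ε hε => ?_
  obtain ⟨N, hN⟩ := h (‖x‖ + 1) (by positivity) ε hε
  exact ⟨N, fun n hn => by simpa [dist_eq_norm] using hN n hn x (by linarith)⟩

theorem SuperRegularAt.isFixedPt {T : E → E} {z : E} (hT : Continuous T)
    (h : SuperRegularAt T z) : IsFixedPt T z :=
  isFixedPt_of_tendsto_iterate (h.tendsto_iterate z) hT.continuousAt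

theorem SuperRegularAt.existsUnique_fixedPt {T : E → E} {z : E} (hT : Continuous T)
    (h : SuperRegularAt T z) : ∃! x : E, T x = x := by
  refine ⟨z, h.isFixedPt hT, fun w hw => tendsto_nhds_unique ?_ (h.tendsto_iterate w)⟩
  simpa only [(IsFixedPt.iterate hw _).eq] using tendsto_const_nhds

theorem Contraction.exists_superRegularAt [CompleteSpace E] {C : E → E} (hC : Contraction C) :
    ∃ z, SuperRegularAt C z := by
  obtain ⟨l, hl0, hl1, hl⟩ := hC
  have hlip : LipschitzWith (Real.toNNReal l) C := LipschitzWith.of_dist_le_mul fun x y => by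
    simpa [dist_eq_norm, Real.coe_toNNReal l hl0] using hl x y
  have hK : ContractingWith (Real.toNNReal l) C := ⟨by simpa using hl1, hlip⟩
  set z := hK.fixedPoint C
  refine ⟨z, fun s hs ε hε => ?_⟩
  have hlim : Tendsto (fun n : ℕ => l ^ n * (s + ‖z‖)) atTop (𝓝 0) := by
    simpa using (tendsto_pow_atTop_nhds_zero_of_lt_one hl0 hl1).mul_const (s + ‖z‖)
  obtain ⟨N, hN⟩ := eventually_atTop.mp (hlim.eventually (gt_mem_nhds hε))
  refine ⟨N, fun n hn x hx => lt_of_le_of_lt ?_ (hN n hn)⟩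
  calc ‖C^[n] x - z‖ = dist (C^[n] x) (C^[n] z) := by
        rw [(hK.fixedPoint_isFixedPt.iterate n).eq, dist_eq_norm]
    _ ≤ l ^ n * dist x z := by
        simpa [Real.coe_toNNReal l hl0] using (hlip.iterate n).dist_le_mul x z
    _ ≤ l ^ n * (s + ‖z‖) := by
        gcongr
        exact (dist_le_norm_add_norm x z).trans (by linarith)

/-- The `C`-orbit of `x` stays in the `R`-ball about `z`, hence the `S`-orbit, being within `k δ`
of it, stays where `S` is `δ`-close to `C`. -/
theorem norm_iterate_sub_iterate_le {S C : E → E} {z : E} (hC : Nonexpansive C)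
    (hz : IsFixedPt C z) {R δ : ℝ} (hδ : 0 ≤ δ) {N : ℕ}
    (hSC : ∀ y, ‖y - z‖ ≤ R + N * δ → ‖S y - C y‖ ≤ δ) {x : E} (hx : ‖x - z‖ ≤ R) :
    ∀ k ≤ N, ‖S^[k] x - C^[k] x‖ ≤ k * δ
  | 0, _ => by simp
  | k + 1, hk => by
    have ih := norm_iterate_sub_iterate_le hC hz hδ hSC hx k (by omega)
    have hkN : (k : ℝ) * δ ≤ N * δ := by gcongr; exact_mod_cast (by omega : k ≤ N)
    have hSk : ‖S^[k] x - z‖ ≤ R + N * δ :=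
      calc ‖S^[k] x - z‖ ≤ ‖S^[k] x - C^[k] x‖ + ‖C^[k] x - z‖ :=
            norm_sub_le_norm_sub_add_norm_sub _ _ _
        _ ≤ k * δ + R := add_le_add ih ((hC.norm_iterate_sub_le_of_isFixedPt hz k x).trans hx)
        _ ≤ R + N * δ := by linarith
    rw [iterate_succ_apply', iterate_succ_apply']
    calc ‖S (S^[k] x) - C (C^[k] x)‖ ≤ ‖S (S^[k] x) - C (S^[k] x)‖ + ‖C (S^[k] x) - C (C^[k] x)‖ :=
          norm_sub_le_norm_sub_add_norm_sub _ _ _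
      _ ≤ δ + k * δ := add_le_add (hSC _ hSk) ((hC _ _).trans ih)
      _ = (k + 1 : ℕ) * δ := by push_cast; ring

theorem SuperRegularAt.exists_iterate_near_of_near {C : E → E} {z : E} (hC : Nonexpansive C)
    (hz : SuperRegularAt C z) {R ε : ℝ} (hε : 0 < ε) (hεR : ε ≤ R) :
    ∃ δ > 0, ∃ N : ℕ, ∀ S : E → E, (∀ y, ‖y - z‖ ≤ 3 * R → ‖S y - C y‖ ≤ δ) →
      ∀ n ≥ N, ∀ x, ‖x - z‖ ≤ R → ‖S^[n] x - z‖ ≤ ε := by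
  have hfix : IsFixedPt C z := hz.isFixedPt hC.lipschitzWith.continuous
  obtain ⟨N, hN⟩ := hz (2 * R + ‖z‖) (by linarith [norm_nonneg z]) (ε / 2) (half_pos hε)
  set P := N + 1 with hP
  have hP0 : (0 : ℝ) < P := by rw [hP]; positivity
  set δ := ε / (2 * P) with hδ
  have hPδ : P * δ = ε / 2 := by rw [hδ]; field_simp
  refine ⟨δ, div_pos hε (by positivity), P, fun S hSC => ?_⟩
  have hclose : ∀ y, ‖y - z‖ ≤ 2 * R + P * δ → ‖S y - C y‖ ≤ δ :=
    fun y hy => hSC y (by linarith)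
  have habsorb : ∀ y, ‖y - z‖ ≤ 2 * R → ‖S^[P] y - z‖ ≤ ε := fun y hy =>
    calc ‖S^[P] y - z‖ ≤ ‖S^[P] y - C^[P] y‖ + ‖C^[P] y - z‖ :=
          norm_sub_le_norm_sub_add_norm_sub _ _ _
      _ ≤ P * δ + ε / 2 := by
          refine add_le_add (norm_iterate_sub_iterate_le hC hfix (by positivity) hclose hy P le_rfl)
            (hN P (by omega) y ?_).le
          linarith [norm_le_norm_sub_add y z]
      _ = ε := by linarith
  have hbounded : ∀ x, ‖x - z‖ ≤ R → ∀ n, ‖S^[n] x - z‖ ≤ 2 * R := by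
    intro x hx n
    induction n using Nat.strong_induction_on with
    | _ n ih =>
      rcases lt_or_ge n P with hn | hn
      · have hnP : (n : ℝ) * δ ≤ P * δ := by gcongr
        calc ‖S^[n] x - z‖ ≤ ‖S^[n] x - C^[n] x‖ + ‖C^[n] x - z‖ :=
              norm_sub_le_norm_sub_add_norm_sub _ _ _
          _ ≤ n * δ + R := add_le_add
              (norm_iterate_sub_iterate_le hC hfix (by positivity)
                (fun y hy => hclose y (by linarith)) hx n hn.le)
              ((hC.norm_iterate_sub_le_of_isFixedPt hfix n x).trans hx)
          _ ≤ 2 * R := by linarith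
      · obtain ⟨m, rfl⟩ := Nat.exists_eq_add_of_le hn
        rw [iterate_add_apply]
        exact (habsorb _ (ih m (by omega))).trans (by linarith)
  intro n hn x hx
  obtain ⟨m, rfl⟩ := Nat.exists_eq_add_of_le hn
  rw [iterate_add_apply]
  exact habsorb _ (hbounded x hx m)

theorem norm_sub_le_ballSup {S T : E → E} (hS : Nonexpansive S) (hT : Nonexpansive T) {n : ℕ}
    {x : E} (hx : ‖x‖ ≤ n) : ‖S x - T x‖ ≤ ballSup S T n := by
  refine le_csSup ⟨2 * n + ‖S 0 - T 0‖, ?_⟩ ⟨x, hx, rfl⟩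
  rintro _ ⟨y, hy, rfl⟩
  have hSy : ‖S y - S 0‖ ≤ ‖y‖ := by simpa using hS y 0
  have hTy : ‖T 0 - T y‖ ≤ ‖y‖ := by simpa using hT 0 y
  calc ‖S y - T y‖ = ‖(S y - S 0) + (S 0 - T 0) + (T 0 - T y)‖ := by abel_nf
    _ ≤ ‖S y - S 0‖ + ‖S 0 - T 0‖ + ‖T 0 - T y‖ := norm_add₃_le
    _ ≤ 2 * n + ‖S 0 - T 0‖ := by linarith

theorem ballSup_nonneg_s7 {S T : E → E} (hS : Nonexpansive S) (hT : Nonexpansive T) (n : ℕ) :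
    0 ≤ ballSup S T n :=
  (norm_nonneg _).trans (norm_sub_le_ballSup hS hT (x := 0) (by simp))

theorem ballSup_term_le_rho {S T : E → E} (hS : Nonexpansive S) (hT : Nonexpansive T) (n : ℕ) :
    1 / 2 ^ (n + 1) * (ballSup S T (n + 1) / (1 + ballSup S T (n + 1))) ≤ rho S T := by
  set f : ℕ → ℝ := fun k => 1 / 2 ^ (k + 1) * (ballSup S T (k + 1) / (1 + ballSup S T (k + 1)))
  have hf (k : ℕ) : 0 ≤ f k ∧ f k ≤ 1 / 2 * (1 / 2) ^ k := by
    have hb := ballSup_nonneg_s7 hS hT (k + 1)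
    have hfrac : ballSup S T (k + 1) / (1 + ballSup S T (k + 1)) ≤ 1 :=
      (div_le_one (by positivity)).mpr (by linarith)
    refine ⟨by positivity, ?_⟩
    calc f k ≤ 1 / 2 ^ (k + 1) * 1 := mul_le_mul_of_nonneg_left hfrac (by positivity)
      _ = 1 / 2 * (1 / 2) ^ k := by rw [one_div_pow]; ring
  have hsum : Summable f :=
    .of_nonneg_of_le (fun k => (hf k).1) (fun k => (hf k).2) (summable_geometric_two.mul_left _)
  exact hsum.le_tsum n fun k _ => (hf k).1

theorem exists_rho_lt_imp_norm_sub_le {δ : ℝ} (hδ : 0 < δ) (R : ℝ) :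
    ∃ r > 0, ∀ S T : E → E, Nonexpansive S → Nonexpansive T → rho S T < r →
      ∀ y, ‖y‖ ≤ R → ‖S y - T y‖ ≤ δ := by
  obtain ⟨n, hn⟩ := exists_nat_ge R
  refine ⟨1 / 2 ^ (n + 1) * (δ / (1 + δ)), by positivity, fun S T hS hT hρ y hy => ?_⟩
  have hb := ballSup_nonneg_s7 hS hT (n + 1)
  have hdiv : ballSup S T (n + 1) / (1 + ballSup S T (n + 1)) < δ / (1 + δ) :=
    lt_of_mul_lt_mul_left ((ballSup_term_le_rho hS hT n).trans_lt hρ) (by positivity)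
  have hlt : ballSup S T (n + 1) < δ := by
    rw [div_lt_div_iff₀ (by positivity) (by positivity)] at hdiv
    nlinarith
  exact (norm_sub_le_ballSup hS hT (by push_cast; linarith)).trans hlt.le

def IteratesEventuallyNear (T : E → E) (s ε : ℝ) : Prop :=
  ∃ y : E, ∃ N : ℕ, ∀ n ≥ N, ∀ x : E, ‖x‖ ≤ s → ‖T^[n] x - y‖ ≤ ε

theorem IteratesEventuallyNear.mono {T : E → E} {s ε s' ε' : ℝ} (h : IteratesEventuallyNear T s ε)
    (hs : s' ≤ s) (hε : ε ≤ ε') : IteratesEventuallyNear T s' ε' := by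
  obtain ⟨y, N, hN⟩ := h
  exact ⟨y, N, fun n hn x hx => (hN n hn x (hx.trans hs)).trans hε⟩

theorem iteratesEventuallyNear_of_forall_nat {T : E → E}
    (h : ∀ q : ℕ, IteratesEventuallyNear T q (1 / (q + 1))) (s : ℝ) {ε : ℝ} (hε : 0 < ε) :
    IteratesEventuallyNear T s ε := by
  obtain ⟨k, hk⟩ := exists_nat_one_div_lt hε
  obtain ⟨m, hm⟩ := exists_nat_ge s
  refine (h (max k m)).mono (hm.trans (by exact_mod_cast le_max_right k m)) (le_trans ?_ hk.le)
  gcongr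
  exact_mod_cast le_max_left k m

theorem superRegular_of_iteratesEventuallyNear [CompleteSpace E] {T : E → E}
    (h : ∀ s ε : ℝ, 0 < ε → IteratesEventuallyNear T s ε) : SuperRegular T := by
  have hcauchy : CauchySeq fun n => T^[n] 0 := by
    refine Metric.cauchySeq_iff'.mpr fun ε hε => ?_
    obtain ⟨y, N, hN⟩ := h 0 (ε / 3) (by positivity)
    refine ⟨N, fun n hn => ?_⟩
    rw [dist_eq_norm]
    linarith [norm_sub_le_norm_sub_add_norm_sub (T^[n] 0) y (T^[N] 0),
      hN n hn 0 norm_zero.le, norm_sub_rev y (T^[N] 0), hN N le_rfl 0 norm_zero.le]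
  obtain ⟨xT, hxT⟩ := cauchySeq_tendsto_of_complete hcauchy
  refine ⟨xT, fun s hs ε hε => ?_⟩
  obtain ⟨y, N, hN⟩ := h s (ε / 3) (by positivity)
  have hy : ‖xT - y‖ ≤ ε / 3 :=
    le_of_tendsto (hxT.sub_const y).norm
      (eventually_atTop.mpr ⟨N, fun n hn => hN n hn 0 (by simpa using hs.le)⟩)
  refine ⟨N, fun n hn x hx => ?_⟩
  linarith [norm_sub_le_norm_sub_add_norm_sub (T^[n] x) y xT, hN n hn x hx, norm_sub_rev y xT]

theorem SuperRegularAt.exists_rho_lt_imp_iteratesEventuallyNear {C : E → E} {z : E}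
    (hC : Nonexpansive C) (hz : SuperRegularAt C z) (s : ℝ) {ε : ℝ} (hε : 0 < ε) :
    ∃ r > 0, ∀ S : E → E, Nonexpansive S → rho S C < r → IteratesEventuallyNear S s ε := by
  set R := max ε (s + ‖z‖)
  obtain ⟨δ, hδ, N, hnear⟩ := hz.exists_iterate_near_of_near hC hε (le_max_left _ _)
  obtain ⟨r, hr, hclose⟩ := exists_rho_lt_imp_norm_sub_le (E := E) hδ (3 * R + ‖z‖)
  refine ⟨r, hr, fun S hS hρ => ⟨z, N, fun n hn x hx => hnear S (fun y hy => ?_) n hn x ?_⟩⟩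
  · exact hclose S C hS hC hρ y (by linarith [norm_le_norm_sub_add y z])
  · linarith [norm_sub_le x z, le_max_right ε (s + ‖z‖)]

end

theorem generic_superRegular_subspace_general (F : Set (X → X)) (hF : ∀ T ∈ F, Nonexpansive T)
    (d : (X → X) → (X → X) → ℝ)
    (hd_triangle : ∀ T₁ ∈ F, ∀ T₂ ∈ F, ∀ T₃ ∈ F, d T₁ T₃ ≤ d T₁ T₂ + d T₂ T₃)
    (hd_eq : ∀ T₁ ∈ F, ∀ T₂ ∈ F, (d T₁ T₂ = 0 ↔ T₁ = T₂))
    (hd_ge : ∀ T₁ ∈ F, ∀ T₂ ∈ F, rho T₁ T₂ ≤ d T₁ T₂)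
    (hdense : ∀ T ∈ F, ∀ ε : ℝ, 0 < ε → ∃ C ∈ F, Contraction C ∧ d C T < ε) :
    ∃ O : ℕ → Set (X → X),
      (∀ q, O q ⊆ F) ∧
      (∀ q, ∀ T ∈ O q, ∃ r > (0 : ℝ), ∀ S ∈ F, d S T < r → S ∈ O q) ∧
      (∀ q, ∀ T ∈ F, ∀ ε : ℝ, 0 < ε → ∃ S ∈ O q, d S T < ε) ∧
      (∀ T ∈ ⋂ q, O q, SuperRegular T ∧ ∃! x : X, T x = x) := by
  set O : ℕ → Set (X → X) := fun q =>
    {T | T ∈ F ∧ ∃ r > 0, ∀ S ∈ F, d S T < r → IteratesEventuallyNear S q (1 / (q + 1))}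
  refine ⟨O, fun q T hT => hT.1, ?_, ?_, ?_⟩
  · rintro q T ⟨hTF, r, hr, hball⟩
    refine ⟨r / 2, half_pos hr, fun S hSF hST => ⟨hSF, r / 2, half_pos hr, fun S' hS'F hS'S => ?_⟩⟩
    exact hball S' hS'F (by linarith [hd_triangle S' hS'F S hSF T hTF])
  · intro q T hTF ε hε
    obtain ⟨C, hCF, hC, hCT⟩ := hdense T hTF ε hε
    obtain ⟨z, hz⟩ := hC.exists_superRegularAt
    obtain ⟨r, hr, hnear⟩ := hz.exists_rho_lt_imp_iteratesEventuallyNear hC.nonexpansive q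
      (ε := 1 / (q + 1)) (by positivity)
    refine ⟨C, ⟨hCF, r, hr, fun S hSF hSC => hnear S (hF S hSF) ?_⟩, hCT⟩
    exact (hd_ge S hSF C hCF).trans_lt hSC
  · intro T hT
    have hTF : T ∈ F := (Set.mem_iInter.mp hT 0).1
    have hnear (q : ℕ) : IteratesEventuallyNear T q (1 / (q + 1)) := by
      obtain ⟨-, r, hr, hball⟩ := Set.mem_iInter.mp hT q
      exact hball T hTF (by rwa [(hd_eq T hTF T hTF).mpr rfl])
    obtain ⟨xT, hxT⟩ := superRegular_of_iteratesEventuallyNear fun s _ =>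
      iteratesEventuallyNear_of_forall_nat hnear s
    exact ⟨⟨xT, hxT⟩, hxT.existsUnique_fixedPt (hF T hTF).lipschitzWith.continuous⟩

/-- generic super-regularity in complete subspaces of `(N(X), ρ)`. -/
theorem generic_superRegular_subspace (F : Set (X → X)) (hF : ∀ T ∈ F, Nonexpansive T)
    (d : (X → X) → (X → X) → ℝ)
    (hd_nonneg : ∀ T₁ ∈ F, ∀ T₂ ∈ F, 0 ≤ d T₁ T₂)
    (hd_symm : ∀ T₁ ∈ F, ∀ T₂ ∈ F, d T₁ T₂ = d T₂ T₁)
    (hd_triangle : ∀ T₁ ∈ F, ∀ T₂ ∈ F, ∀ T₃ ∈ F, d T₁ T₃ ≤ d T₁ T₂ + d T₂ T₃)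
    (hd_eq : ∀ T₁ ∈ F, ∀ T₂ ∈ F, (d T₁ T₂ = 0 ↔ T₁ = T₂))
    (hd_complete : ∀ T : ℕ → X → X, (∀ k, T k ∈ F) →
      (∀ ε : ℝ, 0 < ε → ∃ N : ℕ, ∀ j ≥ N, ∀ k ≥ N, d (T j) (T k) < ε) →
      ∃ S ∈ F, Tendsto (fun k => d (T k) S) atTop (nhds 0))
    (hd_ge : ∀ T₁ ∈ F, ∀ T₂ ∈ F, rho T₁ T₂ ≤ d T₁ T₂)
    (hdense : ∀ T ∈ F, ∀ ε : ℝ, 0 < ε → ∃ C ∈ F, Contraction C ∧ d C T < ε) :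
    ∃ O : ℕ → Set (X → X),
      (∀ q, O q ⊆ F) ∧
      (∀ q, ∀ T ∈ O q, ∃ r > (0 : ℝ), ∀ S ∈ F, d S T < r → S ∈ O q) ∧
      (∀ q, ∀ T ∈ F, ∀ ε : ℝ, 0 < ε → ∃ S ∈ O q, d S T < ε) ∧
      (∀ T ∈ ⋂ q, O q, SuperRegular T ∧ ∃! x : X, T x = x) :=
  generic_superRegular_subspace_general F hF d hd_triangle hd_eq hd_ge hdense
end

section
/- For every map R : X → X and every ε > 0, the map x ↦ εx + (1 + ε)Rx is nonexpansive if and only if R is weakly contractive with constant 2ε/(1 + ε), i.e., ‖Rx − Ry‖² ≤ ‖x − y‖² − (2ε/(1 + ε))(‖x − y‖² + ⟨x − y, Rx − Ry⟩) for all x, y ∈ X. -/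
open RealInnerProductSpace Filter

variable {X : Type*} [NormedAddCommGroup X] [InnerProductSpace ℝ X] [CompleteSpace X]

/- Expanding the square, `‖u‖² - ‖ε u + (1 + ε) v‖²` is `(1 + ε)²` times the slack
`‖u‖² - (2ε / (1 + ε)) (‖u‖² + ⟪u, v⟫) - ‖v‖²` of the weak-contraction inequality for
`u = x - y`, `v = R x - R y`; so one is nonnegative exactly when the other is. -/

theorem norm_sq_sub_norm_smul_add_one_add_smul_sq {E : Type*} [NormedAddCommGroup E]
    [InnerProductSpace ℝ E] {ε : ℝ} (hε : 1 + ε ≠ 0) (u v : E) :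
    ‖u‖ ^ 2 - ‖ε • u + (1 + ε) • v‖ ^ 2 =
      (1 + ε) ^ 2 * (‖u‖ ^ 2 - (2 * ε / (1 + ε)) * (‖u‖ ^ 2 + ⟪u, v⟫) - ‖v‖ ^ 2) := by
  rw [norm_add_sq_real, real_inner_smul_left, real_inner_smul_right, norm_smul, norm_smul,
    mul_pow, mul_pow, Real.norm_eq_abs, Real.norm_eq_abs, sq_abs, sq_abs]
  field_simp
  ring

theorem norm_smul_add_one_add_smul_le_norm_iff {E : Type*} [NormedAddCommGroup E]
    [InnerProductSpace ℝ E] {ε : ℝ} (hε : 1 + ε ≠ 0) (u v : E) :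
    ‖ε • u + (1 + ε) • v‖ ≤ ‖u‖ ↔
      ‖v‖ ^ 2 ≤ ‖u‖ ^ 2 - (2 * ε / (1 + ε)) * (‖u‖ ^ 2 + ⟪u, v⟫) := by
  rw [← pow_le_pow_iff_left₀ (norm_nonneg _) (norm_nonneg _) two_ne_zero, ← sub_nonneg,
    norm_sq_sub_norm_smul_add_one_add_smul_sq hε, mul_nonneg_iff_of_pos_left (by positivity),
    sub_nonneg]

/-- `εId + (1+ε)R` is nonexpansive iff `R` is `2ε/(1+ε)` weakly contractive. -/
theorem nonexpansive_iff_weaklyContractive (R : X → X) (ε : ℝ) (hε : 0 < ε) :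
    (∀ x y : X, ‖(ε • x + (1 + ε) • R x) - (ε • y + (1 + ε) • R y)‖ ≤ ‖x - y‖) ↔
    (∀ x y : X, ‖R x - R y‖ ^ 2 ≤
      ‖x - y‖ ^ 2 - (2 * ε / (1 + ε)) * (‖x - y‖ ^ 2 + ⟪x - y, R x - R y⟫)) := by
  refine forall₂_congr fun x y => ?_
  rw [show ε • x + (1 + ε) • R x - (ε • y + (1 + ε) • R y) =
      ε • (x - y) + (1 + ε) • (R x - R y) by module]
  exact norm_smul_add_one_add_smul_le_norm_iff (by positivity) _ _
end

section
/- If T : X → X is nonexpansive and weakly contractive with some constant l ∈ (0, 2), then T has exactly one fixed point: there exists a unique x ∈ X with Tx = x. -/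
/-! With `u = x - y` and `v = T x - T y`, weak contractivity says exactly
`l ‖u + v‖² ≤ (2 - l) (‖u‖² - ‖v‖²)`. Together with the reverse triangle inequality
`|‖u + v‖ - ‖u‖| ≤ ‖v‖` this forces `‖u + v‖ ≤ (2 - l) ‖u‖`, so the averaged map
`x ↦ (x + T x) / 2` is a Banach contraction with constant `1 - l / 2`; its fixed points are
those of `T`. -/

open RealInnerProductSpace Filter

variable {X : Type*} [NormedAddCommGroup X] [InnerProductSpace ℝ X] [CompleteSpace X]

theorem norm_add_le_of_mul_norm_add_sq_le {F : Type*} [SeminormedAddCommGroup F] {l : ℝ}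
    (hl2 : l ≤ 2) {u v : F} (h : l * ‖u + v‖ ^ 2 ≤ (2 - l) * (‖u‖ ^ 2 - ‖v‖ ^ 2)) :
    ‖u + v‖ ≤ (2 - l) * ‖u‖ := by
  have hreverse : (‖u + v‖ - ‖u‖) ^ 2 ≤ ‖v‖ ^ 2 := by
    simpa using sq_le_sq.mpr (abs_norm_sub_norm_le (u + v) u |>.trans_eq (by simp))
  have hquad : ‖u + v‖ * (‖u + v‖ - (2 - l) * ‖u‖) ≤ 0 := by
    nlinarith [mul_le_mul_of_nonneg_left hreverse (sub_nonneg.mpr hl2)]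
  rcases (norm_nonneg (u + v)).eq_or_lt with h0 | hpos
  · rw [← h0]; exact mul_nonneg (sub_nonneg.mpr hl2) (norm_nonneg u)
  · linarith [nonpos_of_mul_nonpos_right hquad hpos]

theorem isFixedPt_midpoint_iff {V : Type*} [AddCommGroup V] [Module ℝ V] {T : V → V} {x : V} :
    Function.IsFixedPt (fun x ↦ midpoint ℝ x (T x)) x ↔ Function.IsFixedPt T x :=
  (midpoint_eq_left_iff ℝ).trans eq_comm

section WeaklyContractive

variable {E : Type*} [NormedAddCommGroup E] [InnerProductSpace ℝ E]

def WeaklyContractiveWith (l : ℝ) (T : E → E) : Prop :=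
  ∀ x y : E, ‖T x - T y‖ ^ 2 ≤ ‖x - y‖ ^ 2 - l * (‖x - y‖ ^ 2 + ⟪x - y, T x - T y⟫)

namespace WeaklyContractiveWith

variable {l : ℝ} {T : E → E}

theorem mul_norm_add_sq_le (hT : WeaklyContractiveWith l T) (x y : E) :
    l * ‖(x - y) + (T x - T y)‖ ^ 2 ≤ (2 - l) * (‖x - y‖ ^ 2 - ‖T x - T y‖ ^ 2) := by
  rw [norm_add_sq_real]
  linear_combination 2 * hT x y

theorem contractingWith_midpoint (hT : WeaklyContractiveWith l T) (hl0 : 0 < l) (hl2 : l ≤ 2) :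
    ContractingWith (1 - l / 2).toNNReal (fun x ↦ midpoint ℝ x (T x)) := by
  refine ⟨by rw [Real.toNNReal_lt_one]; linarith, LipschitzWith.of_dist_le' fun x y ↦ ?_⟩
  have hsum := norm_add_le_of_mul_norm_add_sq_le hl2 (hT.mul_norm_add_sq_le x y)
  rw [dist_eq_norm, dist_eq_norm, ← vsub_eq_sub, midpoint_vsub_midpoint, vsub_eq_sub, vsub_eq_sub,
    midpoint_eq_smul_add, norm_smul]
  norm_num
  linarith

end WeaklyContractiveWith

end WeaklyContractive

theorem weaklyContractive_unique_fixedPoint_general (T : X → X)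
    (l : ℝ) (hl0 : 0 < l) (hl2 : l < 2)
    (hw : ∀ x y : X, ‖T x - T y‖ ^ 2 ≤
      ‖x - y‖ ^ 2 - l * (‖x - y‖ ^ 2 + ⟪x - y, T x - T y⟫)) :
    ∃! x : X, T x = x := by
  have hS := WeaklyContractiveWith.contractingWith_midpoint hw hl0 hl2.le
  exact ⟨_, isFixedPt_midpoint_iff.mp hS.fixedPoint_isFixedPt,
    fun y hy ↦ hS.fixedPoint_unique (isFixedPt_midpoint_iff.mpr hy)⟩

/-- a weakly contractive nonexpansive map has exactly one fixed point. -/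
theorem weaklyContractive_unique_fixedPoint (T : X → X) (hT : Nonexpansive T)
    (l : ℝ) (hl0 : 0 < l) (hl2 : l < 2)
    (hw : ∀ x y : X, ‖T x - T y‖ ^ 2 ≤
      ‖x - y‖ ^ 2 - l * (‖x - y‖ ^ 2 + ⟪x - y, T x - T y⟫)) :
    ∃! x : X, T x = x :=
  weaklyContractive_unique_fixedPoint_general T l hl0 hl2 hw
end
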